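/- arXiv:2507.01748 — 3 statements merged into one kernel-verified Lean document; each statement's English description precedes it below -/
import Mathlib

section
/- The function g is well defined and continuous on ℝ, is even, satisfies √3/2 < g(s) ≤ 1 for every s ∈ ℝ with g(0) = 1, and g(s) → √3/2 as |s| → ∞. -/
open Real Filter Set

/-- The constant α = (9+3√5)/2. -/
noncomputable def alph : ℝ := (9 + 3 * Real.sqrt 5) / 2

/-- The constant β = 2 α^{3/2} √(α−1). -/
noncomputable def bet : ℝ := 2 * alph ^ ((3 : ℝ) / 2) * Real.sqrt (alph - 1)

/-- The change-of-variable function g (extended evenly to negative arguments):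
g(s) = √(1 − k s²) for |s| < (αk)^{−1/2}, and g(s) = 1/(βk s²) + √3/2 for |s| ≥ (αk)^{−1/2}. -/
noncomputable def g (k s : ℝ) : ℝ :=
  if |s| < 1 / Real.sqrt (alph * k) then Real.sqrt (1 - k * s ^ 2)
  else 1 / (bet * k * s ^ 2) + Real.sqrt 3 / 2

/-- G(t) = ∫₀ᵗ g(s) ds. -/
noncomputable def G (k t : ℝ) : ℝ := ∫ s in (0 : ℝ)..t, g k s

lemma sqrt5_sq : Real.sqrt 5 ^ 2 = 5 := Real.sq_sqrt (by norm_num)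
lemma sqrt3_sq : Real.sqrt 3 ^ 2 = 3 := Real.sq_sqrt (by norm_num)
lemma sqrt5_gt : 2 < Real.sqrt 5 := by
  nlinarith [sqrt5_sq, Real.sqrt_nonneg 5]
lemma sqrt5_lt : Real.sqrt 5 < 3 := by
  nlinarith [sqrt5_sq, Real.sqrt_nonneg 5]
lemma sqrt3_pos : 0 < Real.sqrt 3 := Real.sqrt_pos.mpr (by norm_num)

lemma alph_gt : 4 < alph := by unfold alph; nlinarith [sqrt5_gt]
lemma alph_pos : 0 < alph := by linarith [alph_gt]

lemma sqrt_alph : Real.sqrt alph = Real.sqrt 3 * (1 + Real.sqrt 5) / 2 := by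
  rw [show alph = (Real.sqrt 3 * (1 + Real.sqrt 5) / 2) ^ 2 from by
    unfold alph
    linear_combination (-(1 + Real.sqrt 5) ^ 2 / 4) * sqrt3_sq + (-3 / 4 : ℝ) * sqrt5_sq]
  exact Real.sqrt_sq (by positivity)

lemma sqrt_alph_sub : Real.sqrt (alph - 1) = (3 + Real.sqrt 5) / 2 := by
  rw [show alph - 1 = ((3 + Real.sqrt 5) / 2) ^ 2 from by
    unfold alph
    linear_combination (-1 / 4 : ℝ) * sqrt5_sq]
  exact Real.sqrt_sq (by positivity)

lemma rpow32 : alph ^ ((3 : ℝ) / 2) = alph * Real.sqrt alph := by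
  rw [show (3 : ℝ) / 2 = 1 + 1 / 2 by norm_num, Real.rpow_add alph_pos, Real.rpow_one,
    ← Real.sqrt_eq_rpow]

lemma bet_eq : bet = 3 * Real.sqrt 3 * (11 + 5 * Real.sqrt 5) := by
  unfold bet
  rw [rpow32, sqrt_alph, sqrt_alph_sub]
  unfold alph
  linear_combination (3 * Real.sqrt 3 * (Real.sqrt 5 + 7) / 4) * sqrt5_sq

lemma bet_pos : 0 < bet := by
  rw [bet_eq]; positivity

lemma alph_div_bet : alph / bet = Real.sqrt 3 * (Real.sqrt 5 - 2) / 6 := by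
  rw [bet_eq, div_eq_iff (by positivity)]
  unfold alph
  linear_combination (-(15 : ℝ) / 2) * sqrt5_sq +
    (-(Real.sqrt 5 - 2) * (11 + 5 * Real.sqrt 5) / 2) * sqrt3_sq

lemma key1 : Real.sqrt (1 - 1 / alph) = Real.sqrt 3 * (1 + Real.sqrt 5) / 6 := by
  have h2 : (1 : ℝ) - 1 / alph = (3 + Real.sqrt 5) / 6 := by
    have h0 : alph ≠ 0 := alph_pos.ne'
    field_simp
    unfold alph
    ring_nf
    nlinarith [sqrt5_sq]
  rw [h2, show (3 + Real.sqrt 5) / 6 = (Real.sqrt 3 * (1 + Real.sqrt 5) / 6) ^ 2 from by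
    linear_combination (-(1 + Real.sqrt 5) ^ 2 / 36) * sqrt3_sq + (-1 / 12 : ℝ) * sqrt5_sq,
    Real.sqrt_sq (by positivity)]

/-- g is continuous on ℝ, even, satisfies √3/2 < g(s) ≤ 1 with g(0) = 1,
and g(s) → √3/2 as |s| → ∞. -/
theorem stmt1 (k : ℝ) (hk : 0 < k) :
    Continuous (g k) ∧
    (∀ s : ℝ, g k (-s) = g k s) ∧
    (∀ s : ℝ, Real.sqrt 3 / 2 < g k s ∧ g k s ≤ 1) ∧
    g k 0 = 1 ∧
    Filter.Tendsto (g k) (Filter.cocompact ℝ) (nhds (Real.sqrt 3 / 2)) := by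
  have hak : 0 < alph * k := mul_pos alph_pos hk
  set s₀ : ℝ := 1 / Real.sqrt (alph * k) with hs₀
  have hs₀pos : 0 < s₀ := by positivity
  set d : ℝ := 1 / (alph * k) with hd
  have hdpos : 0 < d := by positivity
  have hs₀sq : s₀ ^ 2 = d := by
    rw [hs₀, div_pow, one_pow, Real.sq_sqrt hak.le]
  set A : ℝ → ℝ := fun s => Real.sqrt (1 - k * s ^ 2) with hA
  set B : ℝ → ℝ := fun s => 1 / (bet * k * max (s ^ 2) d) + Real.sqrt 3 / 2 with hB
  have hsqle : ∀ s : ℝ, s₀ ≤ |s| → d ≤ s ^ 2 := by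
    intro s h
    rw [← hs₀sq, ← sq_abs s]
    exact pow_le_pow_left₀ hs₀pos.le h 2
  have hgeq : ∀ s, g k s = if s₀ ≤ |s| then B s else A s := by
    intro s
    by_cases h : |s| < s₀
    · rw [g, if_pos h, if_neg (not_le.mpr h)]
    · push_neg at h
      rw [g, if_neg (not_lt.mpr h), if_pos h, hB]
      simp only [max_eq_left (hsqle s h)]
  have hkd : k * d = 1 / alph := by
    rw [hd, mul_one_div, mul_comm alph k, div_mul_eq_div_mul_one_div, div_self hk.ne', one_mul]
  have hbkd : bet * k * d = bet / alph := by
    rw [mul_assoc, hkd, mul_one_div]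
  have hAB : ∀ x : ℝ, s₀ = |x| → B x = A x := by
    intro x hx
    have hx2 : x ^ 2 = d := by rw [← sq_abs, ← hx, hs₀sq]
    simp only [hA, hB, hx2, max_self]
    rw [hbkd, one_div_div, alph_div_bet,
      show (1 : ℝ) - k * d = 1 - 1 / alph by rw [hkd], key1]
    ring
  have hAc : Continuous A := by
    rw [hA]
    exact Real.continuous_sqrt.comp
      (continuous_const.sub (continuous_const.mul (continuous_pow 2)))
  have hBc : Continuous B := by
    rw [hB]
    refine Continuous.add (continuous_const.div
      (continuous_const.mul ((continuous_pow 2).max continuous_const)) fun x => ?_)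
      continuous_const
    have : 0 < max (x ^ 2) d := lt_max_of_lt_right hdpos
    exact (mul_pos (mul_pos bet_pos hk) this).ne'
  refine ⟨?_, ?_, ?_, ?_, ?_⟩
  · have : g k = fun s => if s₀ ≤ |s| then B s else A s := funext hgeq
    rw [this]
    exact Continuous.if_le hBc hAc continuous_const continuous_abs hAB
  · intro s
    simp only [g, abs_neg, neg_sq]
  · intro s
    by_cases h : |s| < s₀
    · rw [g, if_pos h]
      constructor
      · rw [show Real.sqrt 3 / 2 = Real.sqrt 3 * (1 / 2) by ring]
        rw [Real.lt_sqrt (by positivity)] at *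
        have hs2 : s ^ 2 < d := by
          rw [← hs₀sq, ← sq_abs s]
          exact pow_lt_pow_left₀ h (abs_nonneg s) two_ne_zero
        have h14 : (1 : ℝ) / alph < 1 / 4 :=
          one_div_lt_one_div_of_lt (by norm_num) alph_gt
        have hks : k * s ^ 2 < 1 / alph := by
          rw [← hkd]
          exact mul_lt_mul_of_pos_left hs2 hk
        nlinarith [sqrt3_sq]
      · rw [Real.sqrt_le_one]
        nlinarith [sq_nonneg s]
    · push_neg at h
      rw [g, if_neg (not_lt.mpr h)]
      have hds : d ≤ s ^ 2 := hsqle s h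
      have hs2pos : 0 < s ^ 2 := lt_of_lt_of_le hdpos hds
      constructor
      · have : 0 < 1 / (bet * k * s ^ 2) :=
          div_pos one_pos (mul_pos (mul_pos bet_pos hk) hs2pos)
        linarith
      · have h1 : 1 / (bet * k * s ^ 2) ≤ 1 / (bet * k * d) := by
          apply one_div_le_one_div_of_le (mul_pos (mul_pos bet_pos hk) hdpos)
          exact mul_le_mul_of_nonneg_left hds (mul_pos bet_pos hk).le
        rw [hbkd, one_div_div, alph_div_bet] at h1
        have h6 : Real.sqrt 3 * (1 + Real.sqrt 5) ≤ 6 := by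
          nlinarith [sqrt3_sq, sqrt5_sq, sqrt5_lt, sqrt3_pos, Real.sqrt_nonneg 5,
            mul_pos sqrt3_pos (show (0:ℝ) < 1 + Real.sqrt 5 by positivity)]
        nlinarith [h1]
  · rw [g, if_pos (by simpa using hak)]
    simp
  · have h2 : Tendsto (fun s : ℝ => s ^ 2) (cocompact ℝ) atTop := by
      have habs : Tendsto (fun s : ℝ => ‖s‖) (cocompact ℝ) atTop :=
        tendsto_norm_cocompact_atTop
      have := (tendsto_pow_atTop (two_ne_zero)).comp habs
      simpa only [Function.comp_def, sq_abs, Real.norm_eq_abs] using this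
    have h3 : Tendsto (fun s : ℝ => bet * k * s ^ 2) (cocompact ℝ) atTop :=
      Tendsto.const_mul_atTop (mul_pos bet_pos hk) h2
    have h4 : Tendsto (fun s : ℝ => 1 / (bet * k * s ^ 2) + Real.sqrt 3 / 2) (cocompact ℝ)
        (nhds (0 + Real.sqrt 3 / 2)) := by
      refine Tendsto.add ?_ tendsto_const_nhds
      exact h3.inv_tendsto_atTop.congr fun s => (one_div _).symm
    rw [zero_add] at h4
    refine h4.congr' ?_
    have hev : ∀ᶠ s : ℝ in cocompact ℝ, s₀ ≤ ‖s‖ :=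
      tendsto_norm_cocompact_atTop.eventually_ge_atTop s₀
    filter_upwards [hev] with s hs
    have hs' : s₀ ≤ |s| := hs
    rw [hgeq s, if_pos hs', hB]
    simp only [max_eq_left (hsqle s hs')]
end

section
/- For every t ∈ ℝ one has −1 ≤ t g'(t)/g(t) ≤ 0. -/
/-!
Since g is even, so is t g'(t)/g(t), and it suffices to take t ≥ 0. Below the breakpoint
R = (αk)^{-1/2} the quantity equals −kt²/(1 − kt²) with kt² < 1/α < 1/2. From R on it equals
−4/(2 + √3 βkt²), and βkt² ≥ βkR² = 2√(α(α−1)) with √3 √(α(α−1)) = 2α − 3 > 1.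
At R the two pieces of g agree because α² − 9α + 9 = 0, and their derivatives agree
because β = 2α √(α(α−1)); so g is differentiable at R, with the derivative of either piece.
-/

open Real Filter Set

lemma hasDerivAt_sqrt_one_sub_mul_sq {k t : ℝ} (h : k * t ^ 2 < 1) :
    HasDerivAt (fun s => √(1 - k * s ^ 2)) (-(k * t) / √(1 - k * t ^ 2)) t := by
  have h₁ : HasDerivAt (fun s : ℝ => 1 - k * s ^ 2) (-(2 * k * t)) t := by
    refine (((hasDerivAt_pow 2 t).const_mul k).const_sub 1).congr_deriv ?_
    push_cast
    ring
  convert h₁.sqrt (by linarith) using 1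
  ring

lemma hasDerivAt_one_div_mul_sq_add (c d : ℝ) {t : ℝ} (ht : t ≠ 0) :
    HasDerivAt (fun s => 1 / (c * s ^ 2) + d) (-2 / (c * t ^ 3)) t := by
  have h := (((hasDerivAt_pow 2 t).inv (pow_ne_zero 2 ht)).const_mul c⁻¹).add_const d
  have hf : (fun s => 1 / (c * s ^ 2) + d) = fun s => c⁻¹ * (s ^ 2)⁻¹ + d := by
    ext s
    rw [one_div, mul_inv]
  rw [hf]
  refine h.congr_deriv ?_
  rcases eq_or_ne c 0 with rfl | hc
  · simp
  · field_simp
    ring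

theorem HasDerivAt.of_eqOn_Icc_of_eqOn_Ici {f f₁ f₂ : ℝ → ℝ} {a b f' : ℝ} (hab : a < b)
    (h₁ : HasDerivAt f₁ f' b) (h₂ : HasDerivAt f₂ f' b) (hf₁ : EqOn f f₁ (Icc a b))
    (hf₂ : EqOn f f₂ (Ici b)) : HasDerivAt f f' b := by
  have h := (h₁.hasDerivWithinAt.congr_of_mem hf₁ (right_mem_Icc.2 hab.le)).union
    (h₂.hasDerivWithinAt.congr_of_mem hf₂ self_mem_Ici)
  rw [Icc_union_Ici_eq_Ici hab.le] at h
  exact h.hasDerivAt (Ici_mem_nhds hab)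

noncomputable def elasticity (f : ℝ → ℝ) (t : ℝ) : ℝ := t * deriv f t / f t

lemma elasticity_eq_of_hasDerivAt {f : ℝ → ℝ} {f' t : ℝ} (h : HasDerivAt f f' t) :
    elasticity f t = t * f' / f t := by
  rw [elasticity, h.deriv]

lemma elasticity_neg {f : ℝ → ℝ} (hf : ∀ x, f (-x) = f x) (t : ℝ) :
    elasticity f (-t) = elasticity f t := by
  have hderiv : deriv f t = -deriv f (-t) := by
    rw [← deriv_comp_neg, funext hf]
  rw [elasticity, elasticity, hderiv, hf]
  ring

lemma elasticity_abs {f : ℝ → ℝ} (hf : ∀ x, f (-x) = f x) (t : ℝ) :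
    elasticity f |t| = elasticity f t := by
  rcases abs_cases t with ⟨h, -⟩ | ⟨h, -⟩ <;> rw [h]
  exact elasticity_neg hf t

lemma neg_div_one_sub_mem_Icc {u : ℝ} (h₀ : 0 ≤ u) (h : 2 * u ≤ 1) :
    -u / (1 - u) ∈ Icc (-1 : ℝ) 0 := by
  have : 0 < 1 - u := by linarith
  constructor
  · rw [le_div_iff₀ this]
    linarith
  · exact div_nonpos_of_nonpos_of_nonneg (by linarith) this.le

lemma neg_four_div_two_add_mem_Icc {x : ℝ} (h : 2 ≤ x) : -4 / (2 + x) ∈ Icc (-1 : ℝ) 0 := by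
  have : 0 < 2 + x := by linarith
  constructor
  · rw [le_div_iff₀ this]
    linarith
  · exact div_nonpos_of_nonpos_of_nonneg (by norm_num) this.le

lemma alph_sq : alph ^ 2 = 9 * alph - 9 := by
  unfold alph
  linear_combination (9 / 4 : ℝ) * Real.sq_sqrt (show (0 : ℝ) ≤ 5 by norm_num)

lemma two_lt_alph : 2 < alph := by
  unfold alph
  linarith [Real.sqrt_nonneg 5]

lemma bet_eq_s4 : bet = 2 * alph * √(alph * (alph - 1)) := by
  have hα : 0 < alph := by linarith [two_lt_alph]
  rw [bet, show (3 : ℝ) / 2 = 1 + 1 / 2 by norm_num, Real.rpow_add hα, Real.rpow_one,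
    ← Real.sqrt_eq_rpow, Real.sqrt_mul hα.le]
  ring

lemma sqrt_three_mul_sqrt_alph_mul : √3 * √(alph * (alph - 1)) = 2 * alph - 3 := by
  have := two_lt_alph
  rw [← Real.sqrt_mul (by norm_num), Real.sqrt_eq_iff_mul_self_eq (by nlinarith) (by linarith)]
  linear_combination (-1 : ℝ) * alph_sq

section

variable {k s t : ℝ}

noncomputable def gBreak (k : ℝ) : ℝ := 1 / √(alph * k)

lemma gBreak_pos (hk : 0 < k) : 0 < gBreak k :=
  one_div_pos.2 (Real.sqrt_pos.2 (mul_pos (by linarith [two_lt_alph]) hk))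

lemma mul_gBreak_sq (hk : 0 < k) : k * gBreak k ^ 2 = alph⁻¹ := by
  have hα : 0 < alph := by linarith [two_lt_alph]
  rw [gBreak, div_pow, Real.sq_sqrt (by positivity)]
  field_simp

lemma g_of_abs_lt (h : |s| < gBreak k) : g k s = √(1 - k * s ^ 2) := if_pos h

lemma g_of_gBreak_le_abs (h : gBreak k ≤ |s|) : g k s = 1 / (bet * k * s ^ 2) + √3 / 2 :=
  if_neg h.not_gt

lemma bet_mul_sq_of_mul_sq_eq (hs : k * s ^ 2 = alph⁻¹) :
    bet * k * s ^ 2 = 2 * √(alph * (alph - 1)) := by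
  have hα : alph ≠ 0 := by linarith [two_lt_alph]
  rw [mul_assoc, hs, bet_eq_s4]
  field_simp

lemma sqrt_one_sub_of_mul_sq_eq (hs : k * s ^ 2 = alph⁻¹) :
    √(1 - k * s ^ 2) = √(alph * (alph - 1)) / alph := by
  have hα : 0 < alph := by linarith [two_lt_alph]
  have hα₁ : 0 ≤ 1 - alph⁻¹ := sub_nonneg.2 (inv_le_one_of_one_le₀ (by linarith [two_lt_alph]))
  rw [hs, Real.sqrt_eq_iff_mul_self_eq hα₁ (by positivity), div_mul_div_comm,
    Real.mul_self_sqrt (by nlinarith [two_lt_alph])]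
  field_simp

lemma one_div_bet_mul_sq_add_of_mul_sq_eq (hs : k * s ^ 2 = alph⁻¹) :
    1 / (bet * k * s ^ 2) + √3 / 2 = √(1 - k * s ^ 2) := by
  have hα : 0 < alph := by linarith [two_lt_alph]
  have hm : 0 < √(alph * (alph - 1)) := Real.sqrt_pos.2 (by nlinarith [two_lt_alph])
  rw [bet_mul_sq_of_mul_sq_eq hs, sqrt_one_sub_of_mul_sq_eq hs]
  field_simp
  linear_combination alph * sqrt_three_mul_sqrt_alph_mul -
    2 * Real.sq_sqrt (show 0 ≤ alph * (alph - 1) by nlinarith [two_lt_alph])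

lemma g_of_abs_le (hk : 0 < k) (h : |s| ≤ gBreak k) : g k s = √(1 - k * s ^ 2) := by
  rcases h.lt_or_eq with h | h
  · exact g_of_abs_lt h
  · rw [g_of_gBreak_le_abs h.ge]
    exact one_div_bet_mul_sq_add_of_mul_sq_eq (by rw [← sq_abs, h, mul_gBreak_sq hk])

lemma two_mul_mul_sq_lt_one (hk : 0 < k) (h : |s| < gBreak k) : 2 * k * s ^ 2 < 1 := by
  have hs : k * s ^ 2 < alph⁻¹ := by
    rw [← mul_gBreak_sq hk, ← sq_abs]
    gcongr
  have : 2 * alph⁻¹ < 1 := by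
    rw [← div_eq_mul_inv, div_lt_one (by linarith [two_lt_alph])]
    exact two_lt_alph
  nlinarith

lemma two_le_sqrt_three_mul_bet_mul_sq (hk : 0 < k) (h : gBreak k ≤ |s|) :
    2 ≤ √3 * (bet * k * s ^ 2) := by
  have hs : bet * k * gBreak k ^ 2 ≤ bet * k * s ^ 2 := by
    rw [← sq_abs s]
    gcongr
    · exact (mul_pos bet_pos hk).le
    · exact (gBreak_pos hk).le
  rw [bet_mul_sq_of_mul_sq_eq (mul_gBreak_sq hk)] at hs
  have := two_lt_alph
  nlinarith [sqrt_three_mul_sqrt_alph_mul, Real.sqrt_nonneg 3]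

lemma hasDerivAt_g_of_abs_lt (hk : 0 < k) (ht : |t| < gBreak k) :
    HasDerivAt (g k) (-(k * t) / √(1 - k * t ^ 2)) t := by
  have hsqrt : k * t ^ 2 < 1 := by nlinarith [two_mul_mul_sq_lt_one hk ht]
  refine (hasDerivAt_sqrt_one_sub_mul_sq hsqrt).congr_of_eventuallyEq ?_
  filter_upwards [(isOpen_lt continuous_abs continuous_const).mem_nhds ht] with s hs
  exact g_of_abs_lt hs

lemma hasDerivAt_g_of_gBreak_lt (hk : 0 < k) (ht : gBreak k < t) :
    HasDerivAt (g k) (-2 / (bet * k * t ^ 3)) t := by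
  have ht₀ : 0 < t := (gBreak_pos hk).trans ht
  refine (hasDerivAt_one_div_mul_sq_add (bet * k) (√3 / 2) ht₀.ne').congr_of_eventuallyEq ?_
  filter_upwards [Ioi_mem_nhds ht] with s hs
  exact g_of_gBreak_le_abs (hs.out.le.trans (le_abs_self s))

lemma hasDerivAt_g_gBreak (hk : 0 < k) :
    HasDerivAt (g k) (-2 / (bet * k * gBreak k ^ 3)) (gBreak k) := by
  have hR := gBreak_pos hk
  have hkR := mul_gBreak_sq hk
  have hsqrt : k * gBreak k ^ 2 < 1 := by
    rw [hkR]
    exact inv_lt_one_of_one_lt₀ (by linarith [two_lt_alph])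
  refine HasDerivAt.of_eqOn_Icc_of_eqOn_Ici (f₁ := fun s => √(1 - k * s ^ 2)) hR ?_
    (hasDerivAt_one_div_mul_sq_add (bet * k) (√3 / 2) hR.ne') ?_ ?_
  · -- both one-sided derivatives equal −1/(R √(α(α−1)))
    convert hasDerivAt_sqrt_one_sub_mul_sq hsqrt using 1
    have hα : 0 < alph := by linarith [two_lt_alph]
    have hm : 0 < √(alph * (alph - 1)) := Real.sqrt_pos.2 (by nlinarith [two_lt_alph])
    rw [sqrt_one_sub_of_mul_sq_eq hkR,
      show bet * k * gBreak k ^ 3 = bet * k * gBreak k ^ 2 * gBreak k by ring,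
      bet_mul_sq_of_mul_sq_eq hkR]
    field_simp
    linear_combination alph * hkR + mul_inv_cancel₀ hα.ne'
  · intro s hs
    exact g_of_abs_le hk ((abs_of_nonneg hs.1).trans_le hs.2)
  · intro s hs
    exact g_of_gBreak_le_abs (hs.out.trans (le_abs_self s))

lemma hasDerivAt_g_of_gBreak_le (hk : 0 < k) (ht : gBreak k ≤ t) :
    HasDerivAt (g k) (-2 / (bet * k * t ^ 3)) t := by
  rcases ht.lt_or_eq with ht | rfl
  · exact hasDerivAt_g_of_gBreak_lt hk ht
  · exact hasDerivAt_g_gBreak hk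

lemma elasticity_g_of_abs_lt (hk : 0 < k) (ht : |t| < gBreak k) :
    elasticity (g k) t = -(k * t ^ 2) / (1 - k * t ^ 2) := by
  have hpos : 0 < 1 - k * t ^ 2 := by nlinarith [two_mul_mul_sq_lt_one hk ht]
  rw [elasticity_eq_of_hasDerivAt (hasDerivAt_g_of_abs_lt hk ht), g_of_abs_lt ht,
    mul_div_assoc', div_div, Real.mul_self_sqrt hpos.le]
  ring

lemma elasticity_g_of_gBreak_le (hk : 0 < k) (ht : gBreak k ≤ t) :
    elasticity (g k) t = -4 / (2 + √3 * (bet * k * t ^ 2)) := by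
  have ht₀ : 0 < t := (gBreak_pos hk).trans_le ht
  have hb := bet_pos
  have : 0 < 2 + √3 * (bet * k * t ^ 2) := by positivity
  rw [elasticity_eq_of_hasDerivAt (hasDerivAt_g_of_gBreak_le hk ht),
    g_of_gBreak_le_abs (ht.trans (le_abs_self t))]
  field_simp
  ring

lemma elasticity_g_mem_Icc_of_nonneg (hk : 0 < k) (ht : 0 ≤ t) :
    elasticity (g k) t ∈ Icc (-1 : ℝ) 0 := by
  rcases lt_or_ge t (gBreak k) with hlt | hge
  · have hlt : |t| < gBreak k := by rwa [abs_of_nonneg ht]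
    rw [elasticity_g_of_abs_lt hk hlt]
    exact neg_div_one_sub_mem_Icc (by positivity) (by nlinarith [two_mul_mul_sq_lt_one hk hlt])
  · rw [elasticity_g_of_gBreak_le hk hge]
    exact neg_four_div_two_add_mem_Icc
      (two_le_sqrt_three_mul_bet_mul_sq hk (hge.trans (le_abs_self t)))

end

lemma g_neg (k s : ℝ) : g k (-s) = g k s := by
  simp only [g, abs_neg, neg_sq]

/-- For every t ∈ ℝ, −1 ≤ t g'(t)/g(t) ≤ 0. -/
theorem stmt4 (k : ℝ) (hk : 0 < k) (t : ℝ) :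
    -1 ≤ t * deriv (g k) t / g k t ∧ t * deriv (g k) t / g k t ≤ 0 := by
  change elasticity (g k) t ∈ Icc (-1) 0
  rw [← elasticity_abs (g_neg k)]
  exact elasticity_g_mem_Icc_of_nonneg hk (abs_nonneg t)
end

section
/- For every ε > 0 there exists a constant C_ε > 0 such that |F(G⁻¹(v))| ≤ ε v² + C_ε |v|^p for all v ∈ ℝ, where F(t) = ∫₀^t f(s) ds. -/
open Real Filter Set

/-- F(t) = ∫₀ᵗ f(s) ds. -/
noncomputable def Fint (f : ℝ → ℝ) (t : ℝ) : ℝ := ∫ s in (0 : ℝ)..t, f s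

/-! Since `g ≥ √3/2 > 1/2`, `G` grows at least like `|t| / 2`, so `|G⁻¹ v| ≤ 2 |v|`.
Condition (f1) near `0`, continuity on a compact annulus and (f2) near infinity together give
`|f s| ≤ ε |s| + C |s|^(p-1)` on all of `ℝ`, hence `|F t| ≤ ε t² + C |t|^p`, and substituting
`t = G⁻¹ v` costs only the factors `2²` and `2^p`. -/

open Topology

lemma eq_zero_of_tendsto_div_nhdsNE {f : ℝ → ℝ} (hf : Continuous f)
    (hf0 : Tendsto (fun s => f s / s) (𝓝[≠] 0) (𝓝 0)) : f 0 = 0 := by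
  have hlim : Tendsto (fun s => f s / s * s) (𝓝[≠] 0) (𝓝 0) := by
    simpa using hf0.mul (tendsto_id.mono_left nhdsWithin_le_nhds)
  refine tendsto_nhds_unique (hf.continuousAt.mono_left nhdsWithin_le_nhds) (hlim.congr' ?_)
  filter_upwards [self_mem_nhdsWithin] with s hs
  exact div_mul_cancel₀ (f s) hs

lemma eventually_abs_le_mul_abs_of_tendsto_div {f : ℝ → ℝ} (hf : Continuous f)
    (hf0 : Tendsto (fun s => f s / s) (𝓝[≠] 0) (𝓝 0)) {ε : ℝ} (hε : 0 < ε) :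
    ∀ᶠ s in 𝓝 0, |f s| ≤ ε * |s| := by
  rw [← nhdsNE_sup_pure, eventually_sup, eventually_pure]
  refine ⟨?_, by simp [eq_zero_of_tendsto_div_nhdsNE hf hf0]⟩
  filter_upwards [hf0.eventually (Metric.closedBall_mem_nhds 0 hε), self_mem_nhdsWithin]
    with s hs hs0
  rwa [dist_zero_right, norm_div, Real.norm_eq_abs, Real.norm_eq_abs,
    div_le_iff₀ (abs_pos.2 hs0)] at hs

lemma eventually_abs_le_rpow_of_tendsto_div {f : ℝ → ℝ} {q : ℝ}
    (hf : Tendsto (fun s => |f s| / |s| ^ q) (cocompact ℝ) (𝓝 0)) :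
    ∀ᶠ s in cocompact ℝ, |f s| ≤ |s| ^ q := by
  filter_upwards [hf.eventually (ge_mem_nhds one_pos),
    (isCompact_singleton (x := (0 : ℝ))).compl_mem_cocompact] with s hs hs0
  rwa [div_le_one (Real.rpow_pos_of_pos (abs_pos.2 hs0) q)] at hs


lemma exists_norm_le_mul_norm_add_rpow {E F : Type*} [NormedAddCommGroup E]
    [NormedAddCommGroup F] [ProperSpace E] {f : E → F} (hf : Continuous f)
    {ε q : ℝ} (hε : 0 ≤ ε) (hq : 0 ≤ q) (h0 : ∀ᶠ x in 𝓝 0, ‖f x‖ ≤ ε * ‖x‖)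
    (hinf : ∀ᶠ x in cocompact E, ‖f x‖ ≤ ‖x‖ ^ q) :
    ∃ C, 0 < C ∧ ∀ x, ‖f x‖ ≤ ε * ‖x‖ + C * ‖x‖ ^ q := by
  obtain ⟨δ, hδ, hsmall⟩ := Metric.eventually_nhds_iff.1 h0
  rw [← Metric.cobounded_eq_cocompact, ← comap_norm_atTop, eventually_comap,
    eventually_atTop] at hinf
  obtain ⟨R, hlarge⟩ := hinf
  obtain ⟨M, hM⟩ := (isCompact_closedBall (0 : E) R).exists_bound_of_continuousOn hf.continuousOn
  have hδq : 0 < δ ^ q := Real.rpow_pos_of_pos hδ q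
  refine ⟨max 1 (M / δ ^ q), by positivity, fun x => ?_⟩
  have hεx : 0 ≤ ε * ‖x‖ := by positivity
  have hxq : 0 ≤ ‖x‖ ^ q := by positivity
  rcases lt_or_ge ‖x‖ δ with hxδ | hδx
  · have := hsmall (by rwa [dist_zero_right])
    nlinarith [le_max_left 1 (M / δ ^ q)]
  suffices ‖f x‖ ≤ max 1 (M / δ ^ q) * ‖x‖ ^ q by linarith
  rcases le_or_gt ‖x‖ R with hxR | hRx
  · calc ‖f x‖ ≤ M := hM x (mem_closedBall_zero_iff.2 hxR)
      _ = M / δ ^ q * δ ^ q := (div_mul_cancel₀ M hδq.ne').symm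
      _ ≤ max 1 (M / δ ^ q) * ‖x‖ ^ q :=
        mul_le_mul (le_max_right _ _) (Real.rpow_le_rpow hδ.le hδx hq) hδq.le (by positivity)
  · calc ‖f x‖ ≤ ‖x‖ ^ q := hlarge _ hRx.le x rfl
      _ ≤ max 1 (M / δ ^ q) * ‖x‖ ^ q := le_mul_of_one_le_left hxq (le_max_left _ _)

lemma abs_Fint_le {f : ℝ → ℝ} {ε C p : ℝ} (hε : 0 ≤ ε) (hC : 0 ≤ C) (hp : 1 ≤ p)
    (hf : ∀ s, |f s| ≤ ε * |s| + C * |s| ^ (p - 1)) (t : ℝ) :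
    |Fint f t| ≤ ε * t ^ 2 + C * |t| ^ p := by
  have hbound : ∀ s ∈ uIoc 0 t, ‖f s‖ ≤ ε * |t| + C * |t| ^ (p - 1) := by
    intro s hs
    have hst : |s| ≤ |t| := by simpa using abs_sub_left_of_mem_uIcc (uIoc_subset_uIcc hs)
    rw [Real.norm_eq_abs]
    have := Real.rpow_le_rpow (abs_nonneg s) hst (by linarith : 0 ≤ p - 1)
    nlinarith [hf s]
  calc |Fint f t| ≤ (ε * |t| + C * |t| ^ (p - 1)) * |t - 0| :=
        intervalIntegral.norm_integral_le_of_norm_le_const hbound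
    _ = ε * t ^ 2 + C * |t| ^ p := by
        have hpow : |t| ^ (p - 1) * |t| = |t| ^ p := by
          rw [← Real.rpow_add_one' (abs_nonneg t) (by linarith), sub_add_cancel]
        rw [sub_zero, ← sq_abs t, ← hpow]
        ring

lemma mul_abs_le_abs_integral {φ : ℝ → ℝ} {c : ℝ} (hφ : ∀ s, c ≤ φ s)
    (hint : ∀ a b, IntervalIntegrable φ MeasureTheory.volume a b) (t : ℝ) :
    c * |t| ≤ |∫ s in (0 : ℝ)..t, φ s| := by
  rcases le_total 0 t with ht | ht
  · have := intervalIntegral.integral_mono_on ht intervalIntegrable_const (hint 0 t)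
      fun s _ => hφ s
    rw [intervalIntegral.integral_const, smul_eq_mul, sub_zero] at this
    rw [abs_of_nonneg ht, mul_comm]
    exact this.trans (le_abs_self _)
  · have := intervalIntegral.integral_mono_on ht intervalIntegrable_const (hint t 0)
      fun s _ => hφ s
    rw [intervalIntegral.integral_const, smul_eq_mul, zero_sub] at this
    rw [abs_of_nonpos ht, intervalIntegral.integral_symm, abs_neg]
    linarith [le_abs_self (∫ s in t..0, φ s)]

lemma abs_comp_le_of_abs_le_mul {F T : ℝ → ℝ} {ε C p L : ℝ} (hε : 0 ≤ ε) (hC : 0 ≤ C)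
    (hp : 0 ≤ p) (hF : ∀ t, |F t| ≤ ε * t ^ 2 + C * |t| ^ p) (hT : ∀ v, |T v| ≤ L * |v|)
    (v : ℝ) : |F (T v)| ≤ ε * L ^ 2 * v ^ 2 + C * L ^ p * |v| ^ p := by
  have hL : 0 ≤ L := nonneg_of_mul_nonneg_left ((abs_nonneg _).trans (hT 1)) (by simp)
  have hsq : T v ^ 2 ≤ L ^ 2 * v ^ 2 := by
    rw [← sq_abs (T v), ← sq_abs v, ← mul_pow]
    exact pow_le_pow_left₀ (abs_nonneg _) (hT v) 2
  have hpow : |T v| ^ p ≤ L ^ p * |v| ^ p := by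
    rw [← Real.mul_rpow hL (abs_nonneg v)]
    exact Real.rpow_le_rpow (abs_nonneg _) (hT v) hp
  calc |F (T v)| ≤ ε * T v ^ 2 + C * |T v| ^ p := hF (T v)
    _ ≤ ε * (L ^ 2 * v ^ 2) + C * (L ^ p * |v| ^ p) := by gcongr
    _ = _ := by ring

lemma four_le_alph : 4 ≤ alph := by
  unfold alph
  linarith [Real.sqrt_nonneg 5]

lemma alph_le_bet : alph ≤ bet := by
  have h4 := four_le_alph
  have h32 : alph ≤ alph ^ ((3 : ℝ) / 2) := by
    simpa using Real.rpow_le_rpow_of_exponent_le (by linarith) (by norm_num : (1 : ℝ) ≤ 3 / 2)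
  have hsqrt : 1 ≤ Real.sqrt (alph - 1) := Real.le_sqrt_of_sq_le (by nlinarith)
  unfold bet
  nlinarith

lemma abs_lt_one_div_sqrt_iff {k : ℝ} (hk : 0 < k) (s : ℝ) :
    |s| < 1 / Real.sqrt (alph * k) ↔ k * s ^ 2 < 1 / alph := by
  rw [one_div, ← Real.sqrt_inv, Real.lt_sqrt (abs_nonneg s), sq_abs, mul_inv, lt_mul_inv_iff₀ hk,
    one_div, mul_comm]

lemma sqrt_three_div_two_le_g {k : ℝ} (hk : 0 < k) (s : ℝ) : Real.sqrt 3 / 2 ≤ g k s := by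
  have h4 := four_le_alph
  unfold g
  split_ifs with hs
  · rw [abs_lt_one_div_sqrt_iff hk] at hs
    have hα : 1 / alph ≤ 1 / 4 := one_div_le_one_div_of_le (by norm_num) h4
    have hsqrt : Real.sqrt 3 / 2 = Real.sqrt (3 / 4) := by
      rw [Real.sqrt_div' 3 (by norm_num : (0 : ℝ) ≤ 4)]
      norm_num
    rw [hsqrt]
    exact Real.sqrt_le_sqrt (by linarith)
  · have hβ : 0 < bet := by linarith [alph_le_bet]
    have : 0 ≤ 1 / (bet * k * s ^ 2) := by positivity
    linarith

lemma g_le_two {k : ℝ} (hk : 0 < k) (s : ℝ) : g k s ≤ 2 := by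
  have h4 := four_le_alph
  unfold g
  split_ifs with hs
  · calc Real.sqrt (1 - k * s ^ 2) ≤ Real.sqrt 1 := Real.sqrt_le_sqrt (by nlinarith [sq_nonneg s])
      _ ≤ 2 := by norm_num
  · rw [abs_lt_one_div_sqrt_iff hk, not_lt] at hs
    have hβ : 1 ≤ bet * k * s ^ 2 := by
      calc (1 : ℝ) = alph * (1 / alph) := by field_simp
        _ ≤ bet * (k * s ^ 2) :=
          mul_le_mul alph_le_bet hs (by positivity) (by linarith [alph_le_bet])
        _ = bet * k * s ^ 2 := by ring
    have h3 : Real.sqrt 3 ≤ 2 := Real.sqrt_le_iff.2 ⟨by norm_num, by norm_num⟩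
    have : 1 / (bet * k * s ^ 2) ≤ 1 := (div_le_one (by linarith)).2 hβ
    linarith

lemma intervalIntegrable_g {k : ℝ} (hk : 0 < k) (a b : ℝ) :
    IntervalIntegrable (g k) MeasureTheory.volume a b := by
  have hmeas : Measurable (g k) := by
    unfold g
    refine Measurable.ite (measurableSet_lt measurable_id.abs measurable_const) ?_ ?_ <;> fun_prop
  refine intervalIntegrable_const (c := (2 : ℝ)).mono_fun' hmeas.aestronglyMeasurable
    (Eventually.of_forall fun s => ?_)
  change ‖g k s‖ ≤ 2
  rw [Real.norm_eq_abs, abs_le]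
  constructor <;> linarith [sqrt_three_div_two_le_g hk s, g_le_two hk s, Real.sqrt_nonneg 3]

lemma abs_le_two_mul_abs_G {k : ℝ} (hk : 0 < k) (t : ℝ) : |t| ≤ 2 * |G k t| := by
  have := mul_abs_le_abs_integral (sqrt_three_div_two_le_g hk) (intervalIntegrable_g hk) t
  have h3 : 1 ≤ Real.sqrt 3 := Real.one_le_sqrt.2 (by norm_num)
  rw [G]
  nlinarith [abs_nonneg t]

theorem stmt15_general (p : ℝ)
    (hp1 : 2 < p)
    (f : ℝ → ℝ) (hf : Continuous f)
    (hf1 : Filter.Tendsto (fun s : ℝ => f s / s) (nhdsWithin 0 {(0 : ℝ)}ᶜ) (nhds 0))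
    (hf2 : Filter.Tendsto (fun s : ℝ => |f s| / |s| ^ (p - 1))
      (Filter.cocompact ℝ) (nhds 0))
    (k : ℝ) (hk : 0 < k) (Ginv : ℝ → ℝ)
    (hR : Function.RightInverse Ginv (G k)) :
    ∀ ε : ℝ, 0 < ε → ∃ C : ℝ, 0 < C ∧
      ∀ v : ℝ, |Fint f (Ginv v)| ≤ ε * v ^ 2 + C * |v| ^ p := by
  intro ε hε
  obtain ⟨C, hC, hfC⟩ := exists_norm_le_mul_norm_add_rpow hf (ε := ε / 4) (q := p - 1)
    (by positivity) (by linarith)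
    (by simpa only [Real.norm_eq_abs] using
      eventually_abs_le_mul_abs_of_tendsto_div hf hf1 (by positivity : 0 < ε / 4))
    (by simpa only [Real.norm_eq_abs] using eventually_abs_le_rpow_of_tendsto_div hf2)
  simp only [Real.norm_eq_abs] at hfC
  have hGinv (v : ℝ) : |Ginv v| ≤ 2 * |v| := by
    simpa only [hR v] using abs_le_two_mul_abs_G hk (Ginv v)
  refine ⟨C * 2 ^ p, by positivity, fun v => ?_⟩
  have := abs_comp_le_of_abs_le_mul (by positivity) hC.le (by linarith)
    (abs_Fint_le (by positivity) hC.le (by linarith) hfC) hGinv v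
  linarith

/-- Under (f1), (f2): for every ε > 0 there is C_ε > 0 with
|F(G⁻¹(v))| ≤ ε v² + C_ε|v|^p for all v ∈ ℝ. -/
theorem stmt15 (N : ℕ) (hN : 3 ≤ N) (p : ℝ)
    (hp1 : 2 < p) (hp2 : p < 2 * (N : ℝ) / ((N : ℝ) - 2))
    (f : ℝ → ℝ) (hf : Continuous f)
    (hf1 : Filter.Tendsto (fun s : ℝ => f s / s) (nhdsWithin 0 {(0 : ℝ)}ᶜ) (nhds 0))
    (hf2 : Filter.Tendsto (fun s : ℝ => |f s| / |s| ^ (p - 1))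
      (Filter.cocompact ℝ) (nhds 0))
    (k : ℝ) (hk : 0 < k) (Ginv : ℝ → ℝ)
    (hL : Function.LeftInverse Ginv (G k)) (hR : Function.RightInverse Ginv (G k)) :
    ∀ ε : ℝ, 0 < ε → ∃ C : ℝ, 0 < C ∧
      ∀ v : ℝ, |Fint f (Ginv v)| ≤ ε * v ^ 2 + C * |v| ^ p :=
  stmt15_general p hp1 f hf hf1 hf2 k hk Ginv hR
end
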